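/- arXiv:1406.5342 — 3 statements merged into one kernel-verified Lean document; each statement's English description precedes it below -/
import Mathlib

section
/- Given a 2-crossed module of Lie groups (L → H → G, ▷, {·,·}), the pair (L → H) with the induced action h ▷ ℓ := ℓ · {t(ℓ)⁻¹, h} forms a crossed module of groups; in particular t : L → H satisfies t(h ▷ ℓ) = h t(ℓ) h⁻¹ for all h ∈ H, ℓ ∈ L. -/
/-!
Everything reduces to computations with the Peiffer lifting whose first argument is `t(ℓ)⁻¹`.
Since `t ∘ t = 1`, the `G`-action by `t(t(ℓ)⁻¹)` is trivial, so axioms (ii), (iv), (v) lose their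
twists there; together with (iii) they give `h ▷ (ℓ * a) = (h ▷ ℓ) * (h ▷ a)` and
`(h₁ * h₂) ▷ ℓ = h₁ ▷ (h₂ ▷ ℓ)`, while (ii) and (iii) give equivariance and the Peiffer identity.
-/

namespace TwoCrossedModule

variable {G H L : Type*} [Group G] [Group H] [Group L]
  (tL : L →* H) (tH : H →* G) (actH : G →* MulAut H) (actL : G →* MulAut L) (br : H → H → L)

def inducedAction (h : H) (ℓ : L) : L := ℓ * br (tL ℓ)⁻¹ h

variable {tL tH actH actL br}

theorem act_tH_tL_inv {X : Type*} [Group X] (act : G →* MulAut X)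
    (hcomplex : ∀ ℓ : L, tH (tL ℓ) = 1) (ℓ : L) (x : X) : act (tH (tL ℓ)⁻¹) x = x := by
  rw [map_inv, hcomplex, inv_one, map_one, MulAut.one_apply]

theorem br_one_left
    (hiv : ∀ h₁ h₂ h₃ : H, br (h₁ * h₂) h₃ = br h₁ (h₂ * h₃ * h₂⁻¹) * actL (tH h₁) (br h₂ h₃))
    (h : H) : br 1 h = 1 := by
  have h1 := hiv 1 1 h
  simp only [one_mul, inv_one, mul_one, map_one, MulAut.one_apply] at h1
  exact left_eq_mul.mp h1

theorem br_one_right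
    (hii : ∀ h₁ h₂ : H, tL (br h₁ h₂) = (h₁ * h₂ * h₁⁻¹) * actH (tH h₁) h₂⁻¹)
    (hiv : ∀ h₁ h₂ h₃ : H, br (h₁ * h₂) h₃ = br h₁ (h₂ * h₃ * h₂⁻¹) * actL (tH h₁) (br h₂ h₃))
    (hv : ∀ h₁ h₂ h₃ : H,
      br h₁ (h₂ * h₃) = br h₁ h₂ * br h₁ h₃ * br (tL (br h₁ h₃))⁻¹ (actH (tH h₁) h₂))
    (h : H) : br h 1 = 1 := by
  have htL : tL (br h 1) = 1 := by simpa using hii h 1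
  have h1 := hv h 1 1
  rw [mul_one, htL, inv_one, map_one, br_one_left hiv, mul_one] at h1
  exact left_eq_mul.mp h1

theorem br_inv_tL_tL (hiii : ∀ ℓ₁ ℓ₂ : L, br (tL ℓ₁) (tL ℓ₂) = ℓ₁ * ℓ₂ * ℓ₁⁻¹ * ℓ₂⁻¹)
    (x y : L) : br (tL x)⁻¹ (tL y) = x⁻¹ * y * x * y⁻¹ := by
  rw [← map_inv, hiii, inv_inv]

theorem tL_br_inv_tL (hcomplex : ∀ ℓ : L, tH (tL ℓ) = 1)
    (hii : ∀ h₁ h₂ : H, tL (br h₁ h₂) = (h₁ * h₂ * h₁⁻¹) * actH (tH h₁) h₂⁻¹)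
    (x : L) (h : H) : tL (br (tL x)⁻¹ h) = (tL x)⁻¹ * h * tL x * h⁻¹ := by
  rw [hii, act_tH_tL_inv actH hcomplex, inv_inv]

theorem br_inv_tL_mul (hcomplex : ∀ ℓ : L, tH (tL ℓ) = 1)
    (hv : ∀ h₁ h₂ h₃ : H,
      br h₁ (h₂ * h₃) = br h₁ h₂ * br h₁ h₃ * br (tL (br h₁ h₃))⁻¹ (actH (tH h₁) h₂))
    (x : L) (h₁ h₂ : H) :
    br (tL x)⁻¹ (h₁ * h₂) =
      br (tL x)⁻¹ h₁ * br (tL x)⁻¹ h₂ * br (tL (br (tL x)⁻¹ h₂))⁻¹ h₁ := by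
  rw [hv, act_tH_tL_inv actH hcomplex]

theorem br_inv_tL_tL_mul (hcomplex : ∀ ℓ : L, tH (tL ℓ) = 1)
    (hiii : ∀ ℓ₁ ℓ₂ : L, br (tL ℓ₁) (tL ℓ₂) = ℓ₁ * ℓ₂ * ℓ₁⁻¹ * ℓ₂⁻¹)
    (hv : ∀ h₁ h₂ h₃ : H,
      br h₁ (h₂ * h₃) = br h₁ h₂ * br h₁ h₃ * br (tL (br h₁ h₃))⁻¹ (actH (tH h₁) h₂))
    (x y : L) (h : H) :
    br (tL x)⁻¹ (tL y * h) = x⁻¹ * y * x * br (tL x)⁻¹ h * y⁻¹ := by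
  rw [br_inv_tL_mul hcomplex hv, br_inv_tL_tL hiii, br_inv_tL_tL hiii]
  group

theorem br_inv_tL_mul_tL (hcomplex : ∀ ℓ : L, tH (tL ℓ) = 1)
    (hii : ∀ h₁ h₂ : H, tL (br h₁ h₂) = (h₁ * h₂ * h₁⁻¹) * actH (tH h₁) h₂⁻¹)
    (hiii : ∀ ℓ₁ ℓ₂ : L, br (tL ℓ₁) (tL ℓ₂) = ℓ₁ * ℓ₂ * ℓ₁⁻¹ * ℓ₂⁻¹)
    (hiv : ∀ h₁ h₂ h₃ : H, br (h₁ * h₂) h₃ = br h₁ (h₂ * h₃ * h₂⁻¹) * actL (tH h₁) (br h₂ h₃))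
    (hv : ∀ h₁ h₂ h₃ : H,
      br h₁ (h₂ * h₃) = br h₁ h₂ * br h₁ h₃ * br (tL (br h₁ h₃))⁻¹ (actH (tH h₁) h₂))
    (x y : L) (h : H) :
    br (tL (x * y))⁻¹ h = y⁻¹ * br (tL x)⁻¹ h * y * br (tL y)⁻¹ h := by
  have hconj : (tL x)⁻¹ * h * ((tL x)⁻¹)⁻¹ = tL (br (tL x)⁻¹ h) * h := by
    rw [tL_br_inv_tL hcomplex hii]
    group
  rw [map_mul, mul_inv_rev, hiv, act_tH_tL_inv actL hcomplex, hconj,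
    br_inv_tL_tL_mul hcomplex hiii hv]
  group

theorem inducedAction_one
    (hii : ∀ h₁ h₂ : H, tL (br h₁ h₂) = (h₁ * h₂ * h₁⁻¹) * actH (tH h₁) h₂⁻¹)
    (hiv : ∀ h₁ h₂ h₃ : H, br (h₁ * h₂) h₃ = br h₁ (h₂ * h₃ * h₂⁻¹) * actL (tH h₁) (br h₂ h₃))
    (hv : ∀ h₁ h₂ h₃ : H,
      br h₁ (h₂ * h₃) = br h₁ h₂ * br h₁ h₃ * br (tL (br h₁ h₃))⁻¹ (actH (tH h₁) h₂))
    (ℓ : L) : inducedAction tL br 1 ℓ = ℓ := by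
  rw [inducedAction, br_one_right hii hiv hv, mul_one]

theorem inducedAction_mul (hcomplex : ∀ ℓ : L, tH (tL ℓ) = 1)
    (hii : ∀ h₁ h₂ : H, tL (br h₁ h₂) = (h₁ * h₂ * h₁⁻¹) * actH (tH h₁) h₂⁻¹)
    (hiii : ∀ ℓ₁ ℓ₂ : L, br (tL ℓ₁) (tL ℓ₂) = ℓ₁ * ℓ₂ * ℓ₁⁻¹ * ℓ₂⁻¹)
    (hiv : ∀ h₁ h₂ h₃ : H, br (h₁ * h₂) h₃ = br h₁ (h₂ * h₃ * h₂⁻¹) * actL (tH h₁) (br h₂ h₃))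
    (hv : ∀ h₁ h₂ h₃ : H,
      br h₁ (h₂ * h₃) = br h₁ h₂ * br h₁ h₃ * br (tL (br h₁ h₃))⁻¹ (actH (tH h₁) h₂))
    (h₁ h₂ : H) (ℓ : L) :
    inducedAction tL br (h₁ * h₂) ℓ = inducedAction tL br h₁ (inducedAction tL br h₂ ℓ) := by
  simp only [inducedAction]
  rw [br_inv_tL_mul hcomplex hv, br_inv_tL_mul_tL hcomplex hii hiii hiv hv]
  group

theorem inducedAction_mul_right (hcomplex : ∀ ℓ : L, tH (tL ℓ) = 1)
    (hii : ∀ h₁ h₂ : H, tL (br h₁ h₂) = (h₁ * h₂ * h₁⁻¹) * actH (tH h₁) h₂⁻¹)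
    (hiii : ∀ ℓ₁ ℓ₂ : L, br (tL ℓ₁) (tL ℓ₂) = ℓ₁ * ℓ₂ * ℓ₁⁻¹ * ℓ₂⁻¹)
    (hiv : ∀ h₁ h₂ h₃ : H, br (h₁ * h₂) h₃ = br h₁ (h₂ * h₃ * h₂⁻¹) * actL (tH h₁) (br h₂ h₃))
    (hv : ∀ h₁ h₂ h₃ : H,
      br h₁ (h₂ * h₃) = br h₁ h₂ * br h₁ h₃ * br (tL (br h₁ h₃))⁻¹ (actH (tH h₁) h₂))
    (h : H) (ℓ₁ ℓ₂ : L) :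
    inducedAction tL br h (ℓ₁ * ℓ₂) = inducedAction tL br h ℓ₁ * inducedAction tL br h ℓ₂ := by
  simp only [inducedAction]
  rw [br_inv_tL_mul_tL hcomplex hii hiii hiv hv]
  group

theorem tL_inducedAction (hcomplex : ∀ ℓ : L, tH (tL ℓ) = 1)
    (hii : ∀ h₁ h₂ : H, tL (br h₁ h₂) = (h₁ * h₂ * h₁⁻¹) * actH (tH h₁) h₂⁻¹)
    (h : H) (ℓ : L) : tL (inducedAction tL br h ℓ) = h * tL ℓ * h⁻¹ := by
  rw [inducedAction, map_mul, tL_br_inv_tL hcomplex hii]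
  group

theorem inducedAction_tL (hiii : ∀ ℓ₁ ℓ₂ : L, br (tL ℓ₁) (tL ℓ₂) = ℓ₁ * ℓ₂ * ℓ₁⁻¹ * ℓ₂⁻¹)
    (ℓ₁ ℓ₂ : L) : inducedAction tL br (tL ℓ₁) ℓ₂ = ℓ₁ * ℓ₂ * ℓ₁⁻¹ := by
  rw [inducedAction, br_inv_tL_tL hiii]
  group

end TwoCrossedModule

open TwoCrossedModule in
theorem two_crossed_module_induced_crossed_module_general
    {G H L : Type*} [Group G] [Group H] [Group L]
    (tL : L →* H) (tH : H →* G)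
    (actH : G →* MulAut H) (actL : G →* MulAut L)
    (br : H → H → L)
    -- normal complex
    (hcomplex : ∀ ℓ : L, tH (tL ℓ) = 1)
    -- (ii)
    (hii : ∀ h₁ h₂ : H, tL (br h₁ h₂) = (h₁ * h₂ * h₁⁻¹) * actH (tH h₁) h₂⁻¹)
    -- (iii)
    (hiii : ∀ ℓ₁ ℓ₂ : L, br (tL ℓ₁) (tL ℓ₂) = ℓ₁ * ℓ₂ * ℓ₁⁻¹ * ℓ₂⁻¹)
    -- (iv)
    (hiv : ∀ h₁ h₂ h₃ : H, br (h₁ * h₂) h₃ = br h₁ (h₂ * h₃ * h₂⁻¹) * actL (tH h₁) (br h₂ h₃))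
    -- (v)
    (hv : ∀ h₁ h₂ h₃ : H,
      br h₁ (h₂ * h₃) = br h₁ h₂ * br h₁ h₃ * br (tL (br h₁ h₃))⁻¹ (actH (tH h₁) h₂)) :
    -- `(L → H, ▷)` with `h ▷ ℓ := ℓ * br (tL ℓ)⁻¹ h` is a crossed module of groups:
    (∀ ℓ : L, ℓ * br (tL ℓ)⁻¹ (1 : H) = ℓ) ∧
    (∀ (h₁ h₂ : H) (ℓ : L),
      ℓ * br (tL ℓ)⁻¹ (h₁ * h₂)
        = (ℓ * br (tL ℓ)⁻¹ h₂) * br (tL (ℓ * br (tL ℓ)⁻¹ h₂))⁻¹ h₁) ∧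
    (∀ (h : H) (ℓ₁ ℓ₂ : L),
      (ℓ₁ * ℓ₂) * br (tL (ℓ₁ * ℓ₂))⁻¹ h
        = (ℓ₁ * br (tL ℓ₁)⁻¹ h) * (ℓ₂ * br (tL ℓ₂)⁻¹ h)) ∧
    -- equivariance of `t : L → H`:
    (∀ (h : H) (ℓ : L), tL (ℓ * br (tL ℓ)⁻¹ h) = h * tL ℓ * h⁻¹) ∧
    -- Peiffer identity for the induced action:
    (∀ ℓ₁ ℓ₂ : L, ℓ₂ * br (tL ℓ₂)⁻¹ (tL ℓ₁) = ℓ₁ * ℓ₂ * ℓ₁⁻¹) :=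
  ⟨inducedAction_one hii hiv hv,
    inducedAction_mul hcomplex hii hiii hiv hv,
    inducedAction_mul_right hcomplex hii hiii hiv hv,
    tL_inducedAction hcomplex hii,
    inducedAction_tL hiii⟩

/-- Given a 2-crossed module of (Lie) groups `(L → H → G, ▷, {·,·})`,
the pair `(L → H)` with the induced action `h ▷ ℓ := ℓ * {t(ℓ)⁻¹, h}` forms a crossed
module of groups; in particular `t : L → H` satisfies `t(h ▷ ℓ) = h * t ℓ * h⁻¹`. -/
theorem two_crossed_module_induced_crossed_module
    {G H L : Type*} [Group G] [Group H] [Group L]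
    (tL : L →* H) (tH : H →* G)
    (actH : G →* MulAut H) (actL : G →* MulAut L)
    (br : H → H → L)
    -- normal complex
    (hcomplex : ∀ ℓ : L, tH (tL ℓ) = 1)
    (hLnormal : tL.range.Normal) (hHnormal : tH.range.Normal)
    -- G-equivariance of the Peiffer lifting
    (hequivar : ∀ (g : G) (h₁ h₂ : H), actL g (br h₁ h₂) = br (actH g h₁) (actH g h₂))
    -- (i)
    (hi₁ : ∀ (g : G) (ℓ : L), tL (actL g ℓ) = actH g (tL ℓ))
    (hi₂ : ∀ (g : G) (h : H), tH (actH g h) = g * tH h * g⁻¹)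
    -- (ii)
    (hii : ∀ h₁ h₂ : H, tL (br h₁ h₂) = (h₁ * h₂ * h₁⁻¹) * actH (tH h₁) h₂⁻¹)
    -- (iii)
    (hiii : ∀ ℓ₁ ℓ₂ : L, br (tL ℓ₁) (tL ℓ₂) = ℓ₁ * ℓ₂ * ℓ₁⁻¹ * ℓ₂⁻¹)
    -- (iv)
    (hiv : ∀ h₁ h₂ h₃ : H, br (h₁ * h₂) h₃ = br h₁ (h₂ * h₃ * h₂⁻¹) * actL (tH h₁) (br h₂ h₃))
    -- (v)
    (hv : ∀ h₁ h₂ h₃ : H,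
      br h₁ (h₂ * h₃) = br h₁ h₂ * br h₁ h₃ * br (tL (br h₁ h₃))⁻¹ (actH (tH h₁) h₂))
    -- (vi)
    (hvi : ∀ (h : H) (ℓ : L), br h (tL ℓ) = (br (tL ℓ) h)⁻¹ * ℓ * actL (tH h) ℓ⁻¹) :
    -- `(L → H, ▷)` with `h ▷ ℓ := ℓ * br (tL ℓ)⁻¹ h` is a crossed module of groups:
    (∀ ℓ : L, ℓ * br (tL ℓ)⁻¹ (1 : H) = ℓ) ∧
    (∀ (h₁ h₂ : H) (ℓ : L),
      ℓ * br (tL ℓ)⁻¹ (h₁ * h₂)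
        = (ℓ * br (tL ℓ)⁻¹ h₂) * br (tL (ℓ * br (tL ℓ)⁻¹ h₂))⁻¹ h₁) ∧
    (∀ (h : H) (ℓ₁ ℓ₂ : L),
      (ℓ₁ * ℓ₂) * br (tL (ℓ₁ * ℓ₂))⁻¹ h
        = (ℓ₁ * br (tL ℓ₁)⁻¹ h) * (ℓ₂ * br (tL ℓ₂)⁻¹ h)) ∧
    -- equivariance of `t : L → H`:
    (∀ (h : H) (ℓ : L), tL (ℓ * br (tL ℓ)⁻¹ h) = h * tL ℓ * h⁻¹) ∧
    -- Peiffer identity for the induced action: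
    (∀ ℓ₁ ℓ₂ : L, ℓ₂ * br (tL ℓ₂)⁻¹ (tL ℓ₁) = ℓ₁ * ℓ₂ * ℓ₁⁻¹) :=
  two_crossed_module_induced_crossed_module_general tL tH actH actL br hcomplex hii hiii hiv hv
end

section
/- Let (H → G, ▷) be a crossed module of matrix Lie groups and (A, B) a local connective structure on an open set U ⊆ ℝⁿ, with fake curvature F := dA + ½[A,A] − t(B). Under a gauge transformation à = g⁻¹ A g + g⁻¹ dg − t(Λ), the fake curvature transforms as F̃ := dà + ½[Ã,Ã] − t(B̃) = g⁻¹ F g, where B̃ = g⁻¹ ▷ B − dΛ − Ã ▷ Λ − ½[Λ,Λ]. -/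
noncomputable section

/-- Points of the base. -/
abbrev E (d : ℕ) := Fin d → ℝ
/-- The matrix algebra `gl(n,ℝ)`, realized as continuous linear endomorphisms of `ℝⁿ`;
the matrix group `GL(n,ℝ)` sits inside it as the units. -/
abbrev Mat (n : ℕ) := (Fin n → ℝ) →L[ℝ] (Fin n → ℝ)

/-- Pointwise exterior derivative of a 1-form: `dA(x)(v,w) = ∂_v A(w) - ∂_w A(v)`. -/
def dOne {d n : ℕ} (A : E d → E d → Mat n) (x v w : E d) : Mat n :=
  fderiv ℝ (fun y => A y w) x v - fderiv ℝ (fun y => A y v) x w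

/-- Fake curvature `F = dA + ½[A,A] - t(B)` evaluated pointwise
(`½[A,A](v,w) = [A(v),A(w)]`). -/
def fakeCurv {d n : ℕ} (t : Mat n →ₗ[ℝ] Mat n) (A : E d → E d → Mat n)
    (B : E d → E d → E d → Mat n) (x v w : E d) : Mat n :=
  dOne A x v w + (A x v * A x w - A x w * A x v) - t (B x v w)

/-! Write `Ã = A' - t(Λ)`, where `A' = g⁻¹ A g + g⁻¹ dg` is the ordinary gauge transform. Since
`d(g⁻¹) = -g⁻¹ dg g⁻¹` and the second derivatives of `g` are symmetric, the ordinary curvature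
`dA' + ½[A',A']` equals `g⁻¹ (dA + ½[A,A]) g`. Shifting `A'` by `-t(Λ)` produces the terms
`-t(dΛ) - [A', tΛ] - [tΛ, A'] + [tΛ, tΛ]`, and these are cancelled exactly by the terms
`t(dΛ + Ã ▷ Λ + ½[Λ,Λ])` of `-t(B̃)`, by equivariance `t(a ▷ χ) = [a, t χ]` and the Peiffer identity
`t(χ) ▷ χ' = [χ, χ']`. What remains is `g⁻¹ (dA + ½[A,A]) g - t(g⁻¹ ▷ B) = g⁻¹ F g`. -/

open Filter Topology

section FDeriv

variable {𝕜 V R : Type*} [NontriviallyNormedField 𝕜] [NormedAddCommGroup V] [NormedSpace 𝕜 V]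
  [NormedRing R] [NormedAlgebra 𝕜 R]

theorem fderiv_fun_mul_apply {a b : V → R} {x : V} (ha : DifferentiableAt 𝕜 a x)
    (hb : DifferentiableAt 𝕜 b x) (v : V) :
    fderiv 𝕜 (fun y => a y * b y) x v = fderiv 𝕜 a x v * b x + a x * fderiv 𝕜 b x v := by
  rw [fderiv_fun_mul' ha hb, add_comm]
  rfl

theorem HasFDerivAt.of_eventually_mul_eq_one [CompleteSpace R] {g g' : V → R} {x : V}
    {Dg : V →L[𝕜] R} (hg : HasFDerivAt g Dg x)
    (hinv : ∀ᶠ y in 𝓝 x, g y * g' y = 1 ∧ g' y * g y = 1) :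
    HasFDerivAt g' (-(ContinuousLinearMap.mulLeftRight 𝕜 R (g' x) (g' x)).comp Dg) x := by
  have hg' : g' =ᶠ[𝓝 x] Ring.inverse ∘ g := hinv.mono fun y hy =>
    (Ring.inverse_unit ⟨g y, g' y, hy.1, hy.2⟩).symm
  obtain ⟨hx₁, hx₂⟩ := hinv.self_of_nhds
  have := (hasFDerivAt_ringInverse (𝕜 := 𝕜) ⟨g x, g' x, hx₁, hx₂⟩).comp x hg
  exact (this.congr_of_eventuallyEq hg').congr_fderiv (by simp)

end FDeriv

theorem conj_gauge_curvature_identity {R : Type*} [Ring R] {p q : R} (hpq : p * q = 1)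
    (av aw Gv Gw dvw dwv S : R) :
    (-(q * Gv * q) * aw * p + q * dvw * p + q * aw * Gv + (-(q * Gv * q) * Gw + q * S))
      - (-(q * Gw * q) * av * p + q * dwv * p + q * av * Gw + (-(q * Gw * q) * Gv + q * S))
      + ((q * av * p + q * Gv) * (q * aw * p + q * Gw)
        - (q * aw * p + q * Gw) * (q * av * p + q * Gv))
      = q * (dvw - dwv + (av * aw - aw * av)) * p := by
  calc _ = q * (dvw - dwv + (av * aw - aw * av)) * p
        + (q * av * (p * q - 1) * aw * p + q * av * (p * q - 1) * Gw
          - q * aw * (p * q - 1) * av * p - q * aw * (p * q - 1) * Gv) := by noncomm_ring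
    _ = _ := by rw [hpq, sub_self]; noncomm_ring

theorem fakeCurv_shift_identity {R F : Type*} [Ring R] [FunLike F R R] [AddMonoidHomClass F R R]
    (t : F) (ht_equiv : ∀ a b : R, t (a * b - b * a) = a * t b - t b * a)
    (ht_peiffer : ∀ a b : R, t a * b - b * t a = a * b - b * a) (D Y X a b l m : R) :
    (D - t Y) + ((a - t l) * (b - t m) - (b - t m) * (a - t l))
      - t (X - Y - (((a - t l) * m - m * (a - t l)) - ((b - t m) * l - l * (b - t m)))
        - (l * m - m * l))
      = D + (a * b - b * a) - t X := by
  have htt : t (l * m - m * l) = t l * t m - t m * t l := by rw [← ht_peiffer, ht_equiv]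
  rw [map_sub t _ (l * m - m * l), htt]
  simp only [map_sub, ht_equiv]
  noncomm_ring

section GaugeTransform

variable {d n : ℕ} {g g' : E d → Mat n} {x : E d}

def curvature (A : E d → E d → Mat n) (x v w : E d) : Mat n :=
  dOne A x v w + (A x v * A x w - A x w * A x v)

def gaugeTransform (A : E d → E d → Mat n) (g g' : E d → Mat n) (y u : E d) : Mat n :=
  g' y * A y u * g y + g' y * fderiv ℝ g y u

theorem dOne_congr {A A' : E d → E d → Mat n} (h : ∀ᶠ y in 𝓝 x, ∀ u, A y u = A' y u) :
    dOne A x = dOne A' x := by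
  have hu : ∀ u, fderiv ℝ (fun y => A y u) x = fderiv ℝ (fun y => A' y u) x := fun u =>
    EventuallyEq.fderiv_eq (h.mono fun y hy => hy u)
  ext v w : 2
  simp only [dOne, hu]

theorem dOne_sub_map (t : Mat n →ₗ[ℝ] Mat n) {A Λ : E d → E d → Mat n} {v w : E d}
    (hA : ∀ u, DifferentiableAt ℝ (fun y => A y u) x)
    (hΛ : ∀ u, DifferentiableAt ℝ (fun y => Λ y u) x) :
    dOne (fun y u => A y u - t (Λ y u)) x v w = dOne A x v w - t (dOne Λ x v w) := by
  have hT : ∀ u a, fderiv ℝ (fun y => A y u - t (Λ y u)) x a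
      = fderiv ℝ (fun y => A y u) x a - t (fderiv ℝ (fun y => Λ y u) x a) := fun u a =>
    DFunLike.congr_fun ((hA u).hasFDerivAt.sub
      ((LinearMap.toContinuousLinearMap t).hasFDerivAt.comp x (hΛ u).hasFDerivAt)).fderiv a
  simp only [dOne, hT, map_sub]
  abel

theorem differentiableAt_gaugeTransform {A : E d → E d → Mat n} {u : E d}
    (hg : ContDiffAt ℝ 2 g x) (hinv : ∀ᶠ y in 𝓝 x, g y * g' y = 1 ∧ g' y * g y = 1)
    (hA : DifferentiableAt ℝ (fun y => A y u) x) :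
    DifferentiableAt ℝ (fun y => gaugeTransform A g g' y u) x := by
  have hgd : DifferentiableAt ℝ g x := hg.differentiableAt (by norm_num)
  have hdg : DifferentiableAt ℝ (fderiv ℝ g) x :=
    (hg.fderiv_right (m := 1) (by norm_num)).differentiableAt (by norm_num)
  have hg'd := (hgd.hasFDerivAt.of_eventually_mul_eq_one hinv).differentiableAt
  exact ((hg'd.mul hA).mul hgd).add (hg'd.mul (hdg.clm_apply (differentiableAt_const u)))

theorem fderiv_gaugeTransform_apply {A : E d → E d → Mat n} {u : E d}
    (hg : ContDiffAt ℝ 2 g x) (hinv : ∀ᶠ y in 𝓝 x, g y * g' y = 1 ∧ g' y * g y = 1)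
    (hA : DifferentiableAt ℝ (fun y => A y u) x) (a : E d) :
    fderiv ℝ (fun y => gaugeTransform A g g' y u) x a =
      -(g' x * fderiv ℝ g x a * g' x) * A x u * g x + g' x * fderiv ℝ (fun y => A y u) x a * g x
        + g' x * A x u * fderiv ℝ g x a
        + (-(g' x * fderiv ℝ g x a * g' x) * fderiv ℝ g x u
          + g' x * fderiv ℝ (fderiv ℝ g) x a u) := by
  have hgd : DifferentiableAt ℝ g x := hg.differentiableAt (by norm_num)
  have hdg : DifferentiableAt ℝ (fderiv ℝ g) x :=
    (hg.fderiv_right (m := 1) (by norm_num)).differentiableAt (by norm_num)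
  have hg' := hgd.hasFDerivAt.of_eventually_mul_eq_one hinv
  have hdgu : DifferentiableAt ℝ (fun y => fderiv ℝ g y u) x :=
    hdg.clm_apply (differentiableAt_const u)
  have hdg' : fderiv ℝ g' x a = -(g' x * fderiv ℝ g x a * g' x) := by simp [hg'.fderiv]
  have hd2g : fderiv ℝ (fun y => fderiv ℝ g y u) x a = fderiv ℝ (fderiv ℝ g) x a u := by
    simp [fderiv_clm_apply hdg (differentiableAt_const u)]
  have hg'A : DifferentiableAt ℝ (fun y => g' y * A y u) x := hg'.differentiableAt.mul hA
  have hg'Ag : DifferentiableAt ℝ (fun y => g' y * A y u * g y) x := hg'A.mul hgd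
  have hg'dg : DifferentiableAt ℝ (fun y => g' y * fderiv ℝ g y u) x :=
    hg'.differentiableAt.mul hdgu
  unfold gaugeTransform
  rw [fderiv_fun_add hg'Ag hg'dg, add_apply, fderiv_fun_mul_apply hg'A hgd,
    fderiv_fun_mul_apply hg'.differentiableAt hA, fderiv_fun_mul_apply hg'.differentiableAt hdgu,
    hdg', hd2g]
  noncomm_ring

theorem curvature_gaugeTransform {A : E d → E d → Mat n}
    (hg : ContDiffAt ℝ 2 g x) (hinv : ∀ᶠ y in 𝓝 x, g y * g' y = 1 ∧ g' y * g y = 1)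
    (hA : ∀ u, DifferentiableAt ℝ (fun y => A y u) x) (v w : E d) :
    curvature (gaugeTransform A g g') x v w = g' x * curvature A x v w * g x := by
  have hsymm := hg.isSymmSndFDerivAt (by simp)
  unfold curvature dOne
  rw [fderiv_gaugeTransform_apply hg hinv (hA w), fderiv_gaugeTransform_apply hg hinv (hA v),
    hsymm v w]
  exact conj_gauge_curvature_identity hinv.self_of_nhds.1 _ _ _ _ _ _ _

end GaugeTransform

theorem fake_curvature_gauge_transformation_general
    {d n : ℕ} (U : Set (E d)) (hU : IsOpen U)
    (t : Mat n →ₗ[ℝ] Mat n)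
    -- differentiated crossed module structure, with `▷ = ad` and conjugation action:
    (ht_equiv : ∀ a b : Mat n, t (a * b - b * a) = a * t b - t b * a)
    (ht_peiffer : ∀ a b : Mat n, t a * b - b * t a = a * b - b * a)
    (A At Λ : E d → E d → Mat n) (B Bt : E d → E d → E d → Mat n)
    (g g' : E d → Mat n)
    (hg_inv : ∀ x ∈ U, g x * g' x = 1 ∧ g' x * g x = 1)
    (hg_sm : ContDiffOn ℝ 2 g U)
    (hA_sm : ∀ v, ContDiffOn ℝ 1 (fun x => A x v) U)
    (hΛ_sm : ∀ v, ContDiffOn ℝ 1 (fun x => Λ x v) U)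
    (ht_gequiv : ∀ x ∈ U, ∀ c : Mat n, t (g' x * c * g x) = g' x * t c * g x)
    -- the gauge-transformed connective structure:
    (hAt : ∀ x ∈ U, ∀ v, At x v = g' x * A x v * g x + g' x * fderiv ℝ g x v - t (Λ x v))
    (hBt : ∀ x ∈ U, ∀ v w, Bt x v w =
      g' x * B x v w * g x
      - (fderiv ℝ (fun y => Λ y w) x v - fderiv ℝ (fun y => Λ y v) x w)
      - ((At x v * Λ x w - Λ x w * At x v) - (At x w * Λ x v - Λ x v * At x w))
      - (Λ x v * Λ x w - Λ x w * Λ x v)) :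
    ∀ x ∈ U, ∀ v w, fakeCurv t At Bt x v w = g' x * fakeCurv t A B x v w * g x := by
  intro x hx v w
  have hxU : U ∈ 𝓝 x := hU.mem_nhds hx
  have hg : ContDiffAt ℝ 2 g x := hg_sm.contDiffAt hxU
  have hinv : ∀ᶠ y in 𝓝 x, g y * g' y = 1 ∧ g' y * g y = 1 := eventually_of_mem hxU hg_inv
  have hA u : DifferentiableAt ℝ (fun y => A y u) x :=
    ((hA_sm u).contDiffAt hxU).differentiableAt one_ne_zero
  have hΛ u : DifferentiableAt ℝ (fun y => Λ y u) x :=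
    ((hΛ_sm u).contDiffAt hxU).differentiableAt one_ne_zero
  have hAt_near : ∀ᶠ y in 𝓝 x, ∀ u, At y u = gaugeTransform A g g' y u - t (Λ y u) :=
    eventually_of_mem hxU hAt
  calc fakeCurv t At Bt x v w
      = curvature (gaugeTransform A g g') x v w - t (g' x * B x v w * g x) := by
        rw [fakeCurv, dOne_congr hAt_near,
          dOne_sub_map t (fun u => differentiableAt_gaugeTransform hg hinv (hA u)) hΛ,
          hBt x hx, hAt x hx v, hAt x hx w]
        exact fakeCurv_shift_identity t ht_equiv ht_peiffer _ _ _ _ _ _ _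
    _ = g' x * fakeCurv t A B x v w * g x := by
        rw [curvature_gaugeTransform hg hinv hA, ht_gequiv x hx, ← sub_mul, ← mul_sub]
        rfl

/-- Under a gauge transformation
`Ã = g⁻¹ A g + g⁻¹ dg - t(Λ)`, `B̃ = g⁻¹ ▷ B - dΛ - Ã ▷ Λ - ½[Λ,Λ]`,
the fake curvature transforms as `F̃ = g⁻¹ F g`. -/
theorem fake_curvature_gauge_transformation
    {d n : ℕ} (U : Set (E d)) (hU : IsOpen U)
    (t : Mat n →ₗ[ℝ] Mat n)
    -- differentiated crossed module structure, with `▷ = ad` and conjugation action: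
    (ht_equiv : ∀ a b : Mat n, t (a * b - b * a) = a * t b - t b * a)
    (ht_peiffer : ∀ a b : Mat n, t a * b - b * t a = a * b - b * a)
    (A At Λ : E d → E d → Mat n) (B Bt : E d → E d → E d → Mat n)
    (g g' : E d → Mat n)
    (hg_inv : ∀ x ∈ U, g x * g' x = 1 ∧ g' x * g x = 1)
    (hg_sm : ContDiffOn ℝ 2 g U) (hg'_sm : ContDiffOn ℝ 2 g' U)
    (hA_sm : ∀ v, ContDiffOn ℝ 1 (fun x => A x v) U)
    (hΛ_sm : ∀ v, ContDiffOn ℝ 1 (fun x => Λ x v) U)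
    (ht_gequiv : ∀ x ∈ U, ∀ c : Mat n, t (g' x * c * g x) = g' x * t c * g x)
    -- the gauge-transformed connective structure:
    (hAt : ∀ x ∈ U, ∀ v, At x v = g' x * A x v * g x + g' x * fderiv ℝ g x v - t (Λ x v))
    (hBt : ∀ x ∈ U, ∀ v w, Bt x v w =
      g' x * B x v w * g x
      - (fderiv ℝ (fun y => Λ y w) x v - fderiv ℝ (fun y => Λ y v) x w)
      - ((At x v * Λ x w - Λ x w * At x v) - (At x w * Λ x v - Λ x v * At x w))
      - (Λ x v * Λ x w - Λ x w * Λ x v)) :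
    ∀ x ∈ U, ∀ v w, fakeCurv t At Bt x v w = g' x * fakeCurv t A B x v w * g x :=
  fake_curvature_gauge_transformation_general U hU t ht_equiv ht_peiffer A At Λ B Bt g g' hg_inv
    hg_sm hA_sm hΛ_sm ht_gequiv hAt hBt

end
end

section
/- In an associative 2-term A∞-algebra A = A₋₁ ⊕ A₀ (graded vector space with m₁ : A → A of degree 1 a differential, m₂ : A ⊗ A → A of degree 0 associative, and m₁ a derivation of m₂), the antisymmetrizations μ₁ := m₁ and μ₂(a,b) := m₂(a,b) − (−1)^{|a||b|} m₂(b,a) define a 2-term L∞-algebra; equivalently, setting g := A₀, h := A₋₁, t := m₁|_h, [x,y] := μ₂(x,y) for x,y ∈ g, x ▷ χ := μ₂(x,χ) for x ∈ g, χ ∈ h, and [χ₁,χ₂] := μ₂(m₁(χ₁), χ₂), one obtains a crossed module of Lie algebras: t is a Lie algebra homomorphism, ▷ is an action by derivations, t(x ▷ χ) = [x, t(χ)], and t(χ₁) ▷ χ₂ = [χ₁, χ₂]. -/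
noncomputable section

variable {k A₀ A₁ : Type*} [Field k] [CharZero k]
  [AddCommGroup A₀] [Module k A₀] [AddCommGroup A₁] [Module k A₁]

/-- Antisymmetrized bracket on `A₀` (degree 0 part, `g`). -/
def br0 (p00 : A₀ →ₗ[k] A₀ →ₗ[k] A₀) (x y : A₀) : A₀ := p00 x y - p00 y x

/-- Antisymmetrized action of `A₀` on `A₋₁` (here denoted `A₁`): `x ▷ χ = μ₂(x,χ)`. -/
def actOn (p01 : A₀ →ₗ[k] A₁ →ₗ[k] A₁) (p10 : A₁ →ₗ[k] A₀ →ₗ[k] A₁)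
    (x : A₀) (χ : A₁) : A₁ := p01 x χ - p10 χ x

/-- Induced bracket on `A₋₁`: `[χ₁,χ₂] := μ₂(m₁ χ₁, χ₂)`. -/
def brh (m1 : A₁ →ₗ[k] A₀) (p01 : A₀ →ₗ[k] A₁ →ₗ[k] A₁) (p10 : A₁ →ₗ[k] A₀ →ₗ[k] A₁)
    (χ₁ χ₂ : A₁) : A₁ := actOn p01 p10 (m1 χ₁) χ₂

/-!
Commutators in an associative algebra satisfy the Jacobi identity, and associativity on the
triples `(g,g,h)`, `(g,h,g)`, `(h,g,g)` makes `▷` a Lie action. Everything about `h` then follows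
formally from `[χ₁,χ₂] = t χ₁ ▷ χ₂` and the equivariance of `t`: skew-symmetry of this bracket is
exactly the Leibniz rule on `A₋₁ ⊗ A₋₁`, and its Jacobi identity is the action identity for
`[t χ₁, t χ₂] = t [χ₁, χ₂]`.
-/

section CrossedModule

variable {K 𝔤 𝔥 : Type*} [Field K] [AddCommGroup 𝔤] [Module K 𝔤] [AddCommGroup 𝔥] [Module K 𝔥]
  {m1 : 𝔥 →ₗ[K] 𝔤} {p00 : 𝔤 →ₗ[K] 𝔤 →ₗ[K] 𝔤} {p01 : 𝔤 →ₗ[K] 𝔥 →ₗ[K] 𝔥}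
  {p10 : 𝔥 →ₗ[K] 𝔤 →ₗ[K] 𝔥}

theorem br0_self (x : 𝔤) : br0 p00 x x = 0 :=
  sub_self _

theorem br0_jacobi (hassoc000 : ∀ x y z : 𝔤, p00 (p00 x y) z = p00 x (p00 y z)) (x y z : 𝔤) :
    br0 p00 x (br0 p00 y z) + br0 p00 y (br0 p00 z x) + br0 p00 z (br0 p00 x y) = 0 := by
  simp only [br0, map_sub, LinearMap.sub_apply, hassoc000]
  abel

theorem actOn_neg (x : 𝔤) (χ : 𝔥) : actOn p01 p10 x (-χ) = -actOn p01 p10 x χ := by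
  simp only [actOn, map_neg, LinearMap.neg_apply]
  abel

theorem actOn_br0
    (hassoc001 : ∀ (x y : 𝔤) (χ : 𝔥), p01 (p00 x y) χ = p01 x (p01 y χ))
    (hassoc010 : ∀ (x : 𝔤) (χ : 𝔥) (y : 𝔤), p10 (p01 x χ) y = p01 x (p10 χ y))
    (hassoc100 : ∀ (χ : 𝔥) (x y : 𝔤), p10 (p10 χ x) y = p10 χ (p00 x y)) (x y : 𝔤) (χ : 𝔥) :
    actOn p01 p10 (br0 p00 x y) χ
      = actOn p01 p10 x (actOn p01 p10 y χ) - actOn p01 p10 y (actOn p01 p10 x χ) := by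
  simp only [br0, actOn, map_sub, LinearMap.sub_apply, hassoc001, hassoc010, hassoc100]
  abel

theorem map_actOn (hder01 : ∀ (x : 𝔤) (χ : 𝔥), m1 (p01 x χ) = p00 x (m1 χ))
    (hder10 : ∀ (χ : 𝔥) (x : 𝔤), m1 (p10 χ x) = p00 (m1 χ) x) (x : 𝔤) (χ : 𝔥) :
    m1 (actOn p01 p10 x χ) = br0 p00 x (m1 χ) := by
  rw [actOn, map_sub, hder01, hder10, br0]

theorem map_brh (hder01 : ∀ (x : 𝔤) (χ : 𝔥), m1 (p01 x χ) = p00 x (m1 χ))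
    (hder10 : ∀ (χ : 𝔥) (x : 𝔤), m1 (p10 χ x) = p00 (m1 χ) x) (χ₁ χ₂ : 𝔥) :
    m1 (brh m1 p01 p10 χ₁ χ₂) = br0 p00 (m1 χ₁) (m1 χ₂) :=
  map_actOn hder01 hder10 _ _

theorem brh_self (hder11 : ∀ χ₁ χ₂ : 𝔥, p01 (m1 χ₁) χ₂ = p10 χ₁ (m1 χ₂)) (χ : 𝔥) :
    brh m1 p01 p10 χ χ = 0 := by
  rw [brh, actOn, hder11, sub_self]

theorem brh_skew (hder11 : ∀ χ₁ χ₂ : 𝔥, p01 (m1 χ₁) χ₂ = p10 χ₁ (m1 χ₂)) (χ₁ χ₂ : 𝔥) :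
    -brh m1 p01 p10 χ₂ χ₁ = brh m1 p01 p10 χ₁ χ₂ := by
  rw [brh, brh, actOn, actOn, hder11, hder11, neg_sub]

theorem actOn_brh (hder01 : ∀ (x : 𝔤) (χ : 𝔥), m1 (p01 x χ) = p00 x (m1 χ))
    (hder10 : ∀ (χ : 𝔥) (x : 𝔤), m1 (p10 χ x) = p00 (m1 χ) x)
    (hassoc001 : ∀ (x y : 𝔤) (χ : 𝔥), p01 (p00 x y) χ = p01 x (p01 y χ))
    (hassoc010 : ∀ (x : 𝔤) (χ : 𝔥) (y : 𝔤), p10 (p01 x χ) y = p01 x (p10 χ y))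
    (hassoc100 : ∀ (χ : 𝔥) (x y : 𝔤), p10 (p10 χ x) y = p10 χ (p00 x y)) (x : 𝔤)
    (χ₁ χ₂ : 𝔥) :
    actOn p01 p10 x (brh m1 p01 p10 χ₁ χ₂)
      = brh m1 p01 p10 (actOn p01 p10 x χ₁) χ₂ + brh m1 p01 p10 χ₁ (actOn p01 p10 x χ₂) := by
  rw [brh, brh, brh, map_actOn hder01 hder10, actOn_br0 hassoc001 hassoc010 hassoc100,
    sub_add_cancel]

theorem brh_jacobi (hder01 : ∀ (x : 𝔤) (χ : 𝔥), m1 (p01 x χ) = p00 x (m1 χ))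
    (hder10 : ∀ (χ : 𝔥) (x : 𝔤), m1 (p10 χ x) = p00 (m1 χ) x)
    (hder11 : ∀ χ₁ χ₂ : 𝔥, p01 (m1 χ₁) χ₂ = p10 χ₁ (m1 χ₂))
    (hassoc001 : ∀ (x y : 𝔤) (χ : 𝔥), p01 (p00 x y) χ = p01 x (p01 y χ))
    (hassoc010 : ∀ (x : 𝔤) (χ : 𝔥) (y : 𝔤), p10 (p01 x χ) y = p01 x (p10 χ y))
    (hassoc100 : ∀ (χ : 𝔥) (x y : 𝔤), p10 (p10 χ x) y = p10 χ (p00 x y)) (χ₁ χ₂ χ₃ : 𝔥) :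
    brh m1 p01 p10 χ₁ (brh m1 p01 p10 χ₂ χ₃)
      + brh m1 p01 p10 χ₂ (brh m1 p01 p10 χ₃ χ₁)
      + brh m1 p01 p10 χ₃ (brh m1 p01 p10 χ₁ χ₂) = 0 := by
  have leibniz : brh m1 p01 p10 (brh m1 p01 p10 χ₁ χ₂) χ₃
      = brh m1 p01 p10 χ₁ (brh m1 p01 p10 χ₂ χ₃)
        + brh m1 p01 p10 χ₂ (brh m1 p01 p10 χ₃ χ₁) := by
    rw [brh, map_brh hder01 hder10, actOn_br0 hassoc001 hassoc010 hassoc100, ← brh_skew hder11 χ₃,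
      brh, brh, brh, brh, actOn_neg, sub_eq_add_neg]
  rw [← leibniz, ← brh_skew hder11, neg_add_cancel]

end CrossedModule

/-- the antisymmetrization of an associative 2-term A∞-algebra
`A = A₋₁ ⊕ A₀` yields a 2-term L∞-algebra, equivalently a crossed module of Lie
algebras `(h := A₋₁ → g := A₀, ▷)`. -/
theorem two_term_Ainfty_gives_crossed_module
    (m1 : A₁ →ₗ[k] A₀)
    (p00 : A₀ →ₗ[k] A₀ →ₗ[k] A₀) (p01 : A₀ →ₗ[k] A₁ →ₗ[k] A₁)
    (p10 : A₁ →ₗ[k] A₀ →ₗ[k] A₁)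
    -- `m₁` is a derivation of `m₂` (graded Leibniz; `m₂` vanishes on `A₋₁ ⊗ A₋₁`):
    (hder01 : ∀ (x : A₀) (χ : A₁), m1 (p01 x χ) = p00 x (m1 χ))
    (hder10 : ∀ (χ : A₁) (x : A₀), m1 (p10 χ x) = p00 (m1 χ) x)
    (hder11 : ∀ χ₁ χ₂ : A₁, p01 (m1 χ₁) χ₂ = p10 χ₁ (m1 χ₂))
    -- associativity of `m₂` on all triples:
    (hassoc000 : ∀ x y z : A₀, p00 (p00 x y) z = p00 x (p00 y z))
    (hassoc001 : ∀ (x y : A₀) (χ : A₁), p01 (p00 x y) χ = p01 x (p01 y χ))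
    (hassoc010 : ∀ (x : A₀) (χ : A₁) (y : A₀), p10 (p01 x χ) y = p01 x (p10 χ y))
    (hassoc100 : ∀ (χ : A₁) (x y : A₀), p10 (p10 χ x) y = p10 χ (p00 x y)) :
    -- `g = A₀` is a Lie algebra under `μ₂`:
    (∀ x : A₀, br0 p00 x x = 0) ∧
    (∀ x y z : A₀,
      br0 p00 x (br0 p00 y z) + br0 p00 y (br0 p00 z x) + br0 p00 z (br0 p00 x y) = 0) ∧
    -- `h = A₋₁` is a Lie algebra under the induced bracket:
    (∀ χ : A₁, brh m1 p01 p10 χ χ = 0) ∧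
    (∀ χ₁ χ₂ χ₃ : A₁,
      brh m1 p01 p10 χ₁ (brh m1 p01 p10 χ₂ χ₃)
        + brh m1 p01 p10 χ₂ (brh m1 p01 p10 χ₃ χ₁)
        + brh m1 p01 p10 χ₃ (brh m1 p01 p10 χ₁ χ₂) = 0) ∧
    -- `t := m₁` is a Lie algebra homomorphism:
    (∀ χ₁ χ₂ : A₁, m1 (brh m1 p01 p10 χ₁ χ₂) = br0 p00 (m1 χ₁) (m1 χ₂)) ∧
    -- `▷` is an action by derivations:
    (∀ (x : A₀) (χ₁ χ₂ : A₁),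
      actOn p01 p10 x (brh m1 p01 p10 χ₁ χ₂)
        = brh m1 p01 p10 (actOn p01 p10 x χ₁) χ₂
          + brh m1 p01 p10 χ₁ (actOn p01 p10 x χ₂)) ∧
    (∀ (x y : A₀) (χ : A₁),
      actOn p01 p10 (br0 p00 x y) χ
        = actOn p01 p10 x (actOn p01 p10 y χ) - actOn p01 p10 y (actOn p01 p10 x χ)) ∧
    -- equivariance `t(x ▷ χ) = [x, t χ]`:
    (∀ (x : A₀) (χ : A₁), m1 (actOn p01 p10 x χ) = br0 p00 x (m1 χ)) ∧
    -- Peiffer identity `t(χ₁) ▷ χ₂ = [χ₁, χ₂]`: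
    (∀ χ₁ χ₂ : A₁, actOn p01 p10 (m1 χ₁) χ₂ = brh m1 p01 p10 χ₁ χ₂) :=
  ⟨br0_self, br0_jacobi hassoc000, brh_self hder11,
    brh_jacobi hder01 hder10 hder11 hassoc001 hassoc010 hassoc100, map_brh hder01 hder10,
    actOn_brh hder01 hder10 hassoc001 hassoc010 hassoc100, actOn_br0 hassoc001 hassoc010 hassoc100,
    map_actOn hder01 hder10, fun _ _ => rfl⟩

end
end
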